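/- arXiv:2605.07452 — 5 statements merged into one kernel-verified Lean document; each statement's English description precedes it below -/
import Mathlib

section
/- Let I be a database with feature facts f(a,v) (at most one value per individual and feature), and let J be obtained from I by keeping all concept and role facts and adding, for each value v occurring with feature f in I, the fact A_{f≥v}(a) whenever f(a,v') ∈ I with v' ≥ v, where A_{f≥v} are fresh concept names. Then for every ALCQ(f) concept C in which all feature comparisons use values occurring in I, the translation C̄ replacing (f ≥ v) by A_{f≥v} satisfies C^I = C̄^J; and there is an ALCQ(f) concept fitting P, N in I iff there is an ALCQ concept fitting P, N in J. -/
structure DB (CN RN Ind : Type) where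
  concFact : CN → Ind → Prop
  roleFact : RN → Ind → Ind → Prop
  adom : Set Ind

def DB.succ {CN RN Ind : Type} (I : DB CN RN Ind) (r : RN) (a : Ind) : Set Ind :=
  {b | I.roleFact r a b}

def IsALCQBisim {CN RN Ind : Type} (I : DB CN RN Ind) (S : Ind → Ind → Prop) : Prop :=
  (∀ a b, S a b → a ∈ I.adom ∧ b ∈ I.adom) ∧
  ∀ a b, S a b →
    (∀ A, I.concFact A a ↔ I.concFact A b) ∧
    (∀ r, ∀ D ⊆ I.succ r a, ∃ E ⊆ I.succ r b, ∃ f : Ind → Ind,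
        Set.BijOn f D E ∧ ∀ d ∈ D, S d (f d)) ∧
    (∀ r, ∀ E ⊆ I.succ r b, ∃ D ⊆ I.succ r a, ∃ f : Ind → Ind,
        Set.BijOn f D E ∧ ∀ d ∈ D, S d (f d))

inductive ALCQ (CN RN : Type) : Type where
  | top : ALCQ CN RN
  | atom (A : CN) : ALCQ CN RN
  | neg (C : ALCQ CN RN) : ALCQ CN RN
  | inter (C D : ALCQ CN RN) : ALCQ CN RN
  | ge (n : ℕ) (r : RN) (C : ALCQ CN RN) : ALCQ CN RN
  | le (n : ℕ) (r : RN) (C : ALCQ CN RN) : ALCQ CN RN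

def ALCQ.sem {CN RN Ind : Type} (I : DB CN RN Ind) : ALCQ CN RN → Set Ind
  | .top => I.adom
  | .atom A => {a ∈ I.adom | I.concFact A a}
  | .neg C => I.adom \ C.sem I
  | .inter C D => C.sem I ∩ D.sem I
  | .ge n r C => {a ∈ I.adom | n ≤ (I.succ r a ∩ C.sem I).ncard}
  | .le n r C => {a ∈ I.adom | (I.succ r a ∩ C.sem I).ncard ≤ n}

def Fits {CN RN Ind : Type} (I : DB CN RN Ind) (C : ALCQ CN RN)
    (P N : Set Ind) : Prop :=
  (∀ a ∈ P, a ∈ C.sem I) ∧ ∀ b ∈ N, b ∉ C.sem I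

/-- A database with feature facts. -/
structure DBf (CN RN FN Ind V : Type) where
  concFact : CN → Ind → Prop
  roleFact : RN → Ind → Ind → Prop
  featFact : FN → Ind → V → Prop
  adom : Set Ind

def DBf.succ {CN RN FN Ind V : Type} (I : DBf CN RN FN Ind V) (r : RN) (a : Ind) : Set Ind :=
  {b | I.roleFact r a b}

/-- ALCQ(f) concepts whose feature comparisons are all of the form (f ≥ v). -/
inductive ALCQf (CN RN FN V : Type) : Type where
  | top : ALCQf CN RN FN V
  | atom (A : CN) : ALCQf CN RN FN V
  | neg (C : ALCQf CN RN FN V) : ALCQf CN RN FN V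
  | inter (C D : ALCQf CN RN FN V) : ALCQf CN RN FN V
  | ge (n : ℕ) (r : RN) (C : ALCQf CN RN FN V) : ALCQf CN RN FN V
  | le (n : ℕ) (r : RN) (C : ALCQf CN RN FN V) : ALCQf CN RN FN V
  | fge (f : FN) (v : V) : ALCQf CN RN FN V

def ALCQf.sem {CN RN FN Ind V : Type} [LinearOrder V]
    (I : DBf CN RN FN Ind V) : ALCQf CN RN FN V → Set Ind
  | .top => I.adom
  | .atom A => {a ∈ I.adom | I.concFact A a}
  | .neg C => I.adom \ C.sem I
  | .inter C D => C.sem I ∩ D.sem I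
  | .ge n r C => {a ∈ I.adom | n ≤ (I.succ r a ∩ C.sem I).ncard}
  | .le n r C => {a ∈ I.adom | (I.succ r a ∩ C.sem I).ncard ≤ n}
  | .fge f v => {a ∈ I.adom | ∃ v', I.featFact f a v' ∧ v ≤ v'}

def Fitsf {CN RN FN Ind V : Type} [LinearOrder V] (I : DBf CN RN FN Ind V)
    (C : ALCQf CN RN FN V) (P N : Set Ind) : Prop :=
  (∀ a ∈ P, a ∈ C.sem I) ∧ ∀ b ∈ N, b ∉ C.sem I

/-- `v` occurs as a value of feature `f` in `I`. -/
def occursVal {CN RN FN Ind V : Type} (I : DBf CN RN FN Ind V) (f : FN) (v : V) : Prop :=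
  ∃ a, I.featFact f a v

/-- All feature comparisons (f ≥ v) of the concept use values occurring in `I`. -/
def allGeOcc {CN RN FN Ind V : Type} (I : DBf CN RN FN Ind V) :
    ALCQf CN RN FN V → Prop
  | .top => True
  | .atom _ => True
  | .neg C => allGeOcc I C
  | .inter C D => allGeOcc I C ∧ allGeOcc I D
  | .ge _ _ C => allGeOcc I C
  | .le _ _ C => allGeOcc I C
  | .fge f v => occursVal I f v

/-- The database `J`: keep all concept and role facts, and add, for each value
`v` occurring with feature `f` in `I`, the fresh concept name `A_{f≥v}`
(encoded as `Sum.inr (f, v)`) at `a` whenever `f(a,v') ∈ I` with `v' ≥ v`. -/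
def featDB {CN RN FN Ind V : Type} [LinearOrder V] (I : DBf CN RN FN Ind V) :
    DB (CN ⊕ FN × V) RN Ind where
  concFact := fun A a =>
    match A with
    | .inl A => I.concFact A a
    | .inr (f, v) => occursVal I f v ∧ ∃ v', I.featFact f a v' ∧ v ≤ v'
  roleFact := I.roleFact
  adom := I.adom

/-- Translation replacing (f ≥ v) by the fresh concept name `A_{f≥v}`. -/
def barF {CN RN FN V : Type} : ALCQf CN RN FN V → ALCQ (CN ⊕ FN × V) RN
  | .top => .top
  | .atom A => .atom (.inl A)
  | .neg C => .neg (barF C)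
  | .inter C D => .inter (barF C) (barF D)
  | .ge n r C => .ge n r (barF C)
  | .le n r C => .le n r (barF C)
  | .fge f v => .atom (.inr (f, v))

section Aux

variable {CN RN FN Ind V : Type} [LinearOrder V]

lemma barF_sem (I : DBf CN RN FN Ind V) :
    ∀ C : ALCQf CN RN FN V, allGeOcc I C → C.sem I = (barF C).sem (featDB I) := by
  intro C hC
  induction C with
  | top => rfl
  | atom A => rfl
  | neg C ih =>
      simp only [ALCQf.sem, barF, ALCQ.sem, ih hC]; rfl
  | inter C D ihC ihD =>
      simp only [ALCQf.sem, barF, ALCQ.sem, ihC hC.1, ihD hC.2]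
  | ge n r C ih =>
      simp only [ALCQf.sem, barF, ALCQ.sem, ih hC]; rfl
  | le n r C ih =>
      simp only [ALCQf.sem, barF, ALCQ.sem, ih hC]; rfl
  | fge f v =>
      ext a
      simp only [ALCQf.sem, barF, ALCQ.sem, featDB, Set.mem_setOf_eq]
      exact ⟨fun ⟨h1, h2⟩ => ⟨h1, hC, h2⟩, fun ⟨h1, _, h2⟩ => ⟨h1, h2⟩⟩

lemma occSet_finite (I : DBf CN RN FN Ind V)
    (hfin : I.adom.Finite)
    (hfeat_mem : ∀ f a v, I.featFact f a v → a ∈ I.adom)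
    (hfun : ∀ f a v v', I.featFact f a v → I.featFact f a v' → v = v')
    (f : FN) : {w : V | occursVal I f w}.Finite := by
  classical
  set S : Set V := {w : V | occursVal I f w} with hSdef
  rcases Set.eq_empty_or_nonempty S with hS | hS
  · simp [hS]
  obtain ⟨w₁, a₁, ha₁⟩ := hS
  set g : V → Ind := fun w => if h : ∃ a, I.featFact f a w then h.choose else a₁ with hg
  have hgfact : ∀ w ∈ S, I.featFact f (g w) w := by
    intro w hw
    have h : ∃ a, I.featFact f a w := hw
    simp only [hg, dif_pos h]
    exact h.choose_spec
  have hinj : Set.InjOn g S := by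
    intro w hw w' hw' hgw
    exact hfun f (g w) w w' (hgfact w hw) (hgw ▸ hgfact w' hw')
  have himg : g '' S ⊆ I.adom := by
    rintro _ ⟨w, hw, rfl⟩
    exact hfeat_mem f (g w) w (hgfact w hw)
  exact Set.Finite.of_finite_image (hfin.subset himg) hinj

lemma exists_f2A (I : DBf CN RN FN Ind V)
    (hfin : I.adom.Finite)
    (hfeat_mem : ∀ f a v, I.featFact f a v → a ∈ I.adom)
    (hfun : ∀ f a v v', I.featFact f a v → I.featFact f a v' → v = v') :
    ∀ C : ALCQf CN RN FN V, ∃ C' : ALCQ (CN ⊕ FN × V) RN,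
      C.sem I = C'.sem (featDB I) := by
  intro C
  induction C with
  | top => exact ⟨.top, rfl⟩
  | atom A => exact ⟨.atom (.inl A), rfl⟩
  | neg C ih =>
      obtain ⟨C', h⟩ := ih
      exact ⟨.neg C', by simp only [ALCQf.sem, ALCQ.sem, h]; rfl⟩
  | inter C D ihC ihD =>
      obtain ⟨C', hC⟩ := ihC; obtain ⟨D', hD⟩ := ihD
      exact ⟨.inter C' D', by simp only [ALCQf.sem, ALCQ.sem, hC, hD]⟩
  | ge n r C ih =>
      obtain ⟨C', h⟩ := ih
      exact ⟨.ge n r C', by simp only [ALCQf.sem, ALCQ.sem, h]; rfl⟩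
  | le n r C ih =>
      obtain ⟨C', h⟩ := ih
      exact ⟨.le n r C', by simp only [ALCQf.sem, ALCQ.sem, h]; rfl⟩
  | fge f v =>
      by_cases hS : (∃ w, occursVal I f w ∧ v ≤ w)
      · set S : Set V := {w : V | occursVal I f w ∧ v ≤ w} with hSdef
        have hSfin : S.Finite :=
          (occSet_finite I hfin hfeat_mem hfun f).subset (fun w hw => hw.1)
        obtain ⟨w₀, hw₀S, hw₀min⟩ := Set.exists_min_image S id hSfin hS
        refine ⟨.atom (.inr (f, w₀)), ?_⟩
        ext a
        simp only [ALCQf.sem, ALCQ.sem, featDB, Set.mem_setOf_eq]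
        constructor
        · rintro ⟨ha, v', hv', hle⟩
          have hv'S : v' ∈ S := ⟨⟨a, hv'⟩, hle⟩
          exact ⟨ha, hw₀S.1, v', hv', hw₀min v' hv'S⟩
        · rintro ⟨ha, _, v', hv', hle⟩
          exact ⟨ha, v', hv', le_trans hw₀S.2 hle⟩
      · refine ⟨.neg .top, ?_⟩
        ext a
        simp only [ALCQf.sem, ALCQ.sem, Set.mem_setOf_eq, Set.mem_diff]
        constructor
        · rintro ⟨ha, v', hv', hle⟩
          exact absurd ⟨v', ⟨a, hv'⟩, hle⟩ hS
        · rintro ⟨ha, hna⟩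
          exact absurd ha hna

lemma exists_A2f (I : DBf CN RN FN Ind V) :
    ∀ C' : ALCQ (CN ⊕ FN × V) RN, ∃ C : ALCQf CN RN FN V,
      C.sem I = C'.sem (featDB I) := by
  intro C'
  induction C' with
  | top => exact ⟨.top, rfl⟩
  | atom A =>
      match A with
      | .inl A => exact ⟨.atom A, rfl⟩
      | .inr (f, v) =>
          by_cases hocc : occursVal I f v
          · refine ⟨.fge f v, ?_⟩
            ext a
            simp only [ALCQf.sem, ALCQ.sem, featDB, Set.mem_setOf_eq]
            exact ⟨fun ⟨h1, h2⟩ => ⟨h1, hocc, h2⟩, fun ⟨h1, _, h2⟩ => ⟨h1, h2⟩⟩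
          · refine ⟨.neg .top, ?_⟩
            ext a
            simp only [ALCQf.sem, ALCQ.sem, featDB, Set.mem_setOf_eq, Set.mem_diff]
            constructor
            · rintro ⟨ha, hna⟩; exact absurd ha hna
            · rintro ⟨ha, h, _⟩; exact absurd h hocc
  | neg C ih =>
      obtain ⟨C', h⟩ := ih
      exact ⟨.neg C', by simp only [ALCQf.sem, ALCQ.sem, h]; rfl⟩
  | inter C D ihC ihD =>
      obtain ⟨C', hC⟩ := ihC; obtain ⟨D', hD⟩ := ihD
      exact ⟨.inter C' D', by simp only [ALCQf.sem, ALCQ.sem, hC, hD]⟩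
  | ge n r C ih =>
      obtain ⟨C', h⟩ := ih
      exact ⟨.ge n r C', by simp only [ALCQf.sem, ALCQ.sem, h]; rfl⟩
  | le n r C ih =>
      obtain ⟨C', h⟩ := ih
      exact ⟨.le n r C', by simp only [ALCQf.sem, ALCQ.sem, h]; rfl⟩

end Aux

theorem stmt5 {CN RN FN Ind V : Type} [LinearOrder V] (I : DBf CN RN FN Ind V)
    (hfin : I.adom.Finite)
    (hfeat_mem : ∀ f a v, I.featFact f a v → a ∈ I.adom)
    (hfun : ∀ f a v v', I.featFact f a v → I.featFact f a v' → v = v') :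
    (∀ C : ALCQf CN RN FN V, allGeOcc I C → C.sem I = (barF C).sem (featDB I)) ∧
    ∀ P N : Set Ind,
      ((∃ C : ALCQf CN RN FN V, Fitsf I C P N) ↔
        ∃ C' : ALCQ (CN ⊕ FN × V) RN, Fits (featDB I) C' P N) := by
  refine ⟨barF_sem I, fun P N => ⟨?_, ?_⟩⟩
  · rintro ⟨C, hP, hN⟩
    obtain ⟨C', h⟩ := exists_f2A I hfin hfeat_mem hfun C
    exact ⟨C', fun a ha => h ▸ hP a ha, fun b hb => h ▸ hN b hb⟩
  · rintro ⟨C', hP, hN⟩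
    obtain ⟨C, h⟩ := exists_A2f I C'
    exact ⟨C, fun a ha => h ▸ hP a ha, fun b hb => h ▸ hN b hb⟩
end

section
/- Let I be a database and I' its ∼-quotient with respect to ALCQ bisimilarity. Then for every a ∈ adom(I) and every index i, the element ⟨[a], i⟩ of I' is ALCQ bisimilar (across the disjoint union of I and I') to a in I; consequently a and ⟨[a], i⟩ satisfy the same ALCQ concepts. -/
/-- `a` and `b` are ALCQ-bisimilar in `I`. -/
def Bisimilar {CN RN Ind : Type} (I : DB CN RN Ind) (a b : Ind) : Prop :=
  ∃ S : Ind → Ind → Prop, IsALCQBisim I S ∧ S a b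

/-- The equivalence class `[a]` of `a` under the maximal ALCQ bisimulation. -/
def cls {CN RN Ind : Type} (I : DB CN RN Ind) (a : Ind) : Set Ind :=
  {b | Bisimilar I a b}

/-- `max_{b ∈ adom(I), r} |succ_I^r(b) ∩ X|`. -/
noncomputable def maxCnt {CN RN Ind : Type} (I : DB CN RN Ind) (X : Set Ind) : ℕ :=
  sSup {n | ∃ b ∈ I.adom, ∃ r : RN, n = (I.succ r b ∩ X).ncard}

/-- The domain of the ∼-quotient: pairs `⟨[a], i⟩` with `1 ≤ i ≤ max_{b,r} |succ_I^r(b) ∩ [a]|`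
(at least the copy `i = 1` is always present). -/
def qadom {CN RN Ind : Type} (I : DB CN RN Ind) : Set (Set Ind × ℕ) :=
  {p | ∃ a ∈ I.adom, p.1 = cls I a ∧ 1 ≤ p.2 ∧ p.2 ≤ max 1 (maxCnt I p.1)}

/-- The ∼-quotient database `I'`. -/
noncomputable def quotDB {CN RN Ind : Type} (I : DB CN RN Ind) :
    DB CN RN (Set Ind × ℕ) where
  concFact := fun A p => p ∈ qadom I ∧ ∃ a, p.1 = cls I a ∧ I.concFact A a
  roleFact := fun r p q => p ∈ qadom I ∧ q ∈ qadom I ∧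
    ∃ a, p.1 = cls I a ∧ q.2 ≤ (I.succ r a ∩ q.1).ncard
  adom := qadom I

/-- ALCQ bisimulations between two databases. -/
def IsALCQBisim2 {CN RN Ind₁ Ind₂ : Type} (I : DB CN RN Ind₁) (J : DB CN RN Ind₂)
    (S : Ind₁ → Ind₂ → Prop) : Prop :=
  (∀ a b, S a b → a ∈ I.adom ∧ b ∈ J.adom) ∧
  ∀ a b, S a b →
    (∀ A, I.concFact A a ↔ J.concFact A b) ∧
    (∀ r, ∀ D ⊆ I.succ r a, ∃ E ⊆ J.succ r b, ∃ f : Ind₁ → Ind₂,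
        Set.BijOn f D E ∧ ∀ d ∈ D, S d (f d)) ∧
    (∀ r, ∀ E ⊆ J.succ r b, ∃ D ⊆ I.succ r a, ∃ f : Ind₁ → Ind₂,
        Set.BijOn f D E ∧ ∀ d ∈ D, S d (f d))

open Set Function

lemma Set.BijOn.exists_symm_rel {α β : Type*} [Nonempty α] {R : α → β → Prop}
    {f : α → β} {s : Set α} {t : Set β} (hf : BijOn f s t) (hR : ∀ x ∈ s, R x (f x)) :
    ∃ g : β → α, BijOn g t s ∧ ∀ y ∈ t, R (g y) y := by
  have hinv := hf.invOn_invFunOn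
  have hg := hf.symm hinv.symm
  refine ⟨invFunOn f s, hg, fun y hy => ?_⟩
  simpa only [hinv.2 hy] using hR _ (hg.mapsTo hy)

lemma Set.Finite.exists_bijOn_Icc_ncard {α : Type*} {s : Set α} (hs : s.Finite) :
    ∃ e : α → ℕ, BijOn e s (Icc 1 s.ncard) :=
  hs.exists_bijOn_of_encard_eq <| by
    rw [← hs.cast_ncard_eq, ← (finite_Icc _ _).cast_ncard_eq, ncard_Icc_nat, Nat.add_sub_cancel]

variable {CN RN Ind Ind₁ Ind₂ Ind₃ : Type}

namespace IsALCQBisim2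

variable {I : DB CN RN Ind₁} {J : DB CN RN Ind₂} {S : Ind₁ → Ind₂ → Prop}

theorem of_bijOn_succ (hadom : ∀ a b, S a b → a ∈ I.adom ∧ b ∈ J.adom)
    (hconc : ∀ a b, S a b → ∀ A, I.concFact A a ↔ J.concFact A b)
    (hsucc : ∀ a b, S a b → ∀ r, ∃ f : Ind₁ → Ind₂,
      BijOn f (I.succ r a) (J.succ r b) ∧ ∀ d ∈ I.succ r a, S d (f d)) :
    IsALCQBisim2 I J S := by
  refine ⟨hadom, fun a b hab => ⟨hconc a b hab, fun r D hD => ?_, fun r E hE => ?_⟩⟩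
  · obtain ⟨f, hf, hfS⟩ := hsucc a b hab r
    exact ⟨f '' D, (image_mono hD).trans hf.image_eq.subset, f,
      (hf.injOn.mono hD).bijOn_image, fun d hd => hfS d (hD hd)⟩
  · obtain ⟨f, hf, hfS⟩ := hsucc a b hab r
    refine ⟨I.succ r a ∩ f ⁻¹' E, inter_subset_left, f,
      ⟨fun d hd => hd.2, hf.injOn.mono inter_subset_left, fun e he => ?_⟩,
      fun d hd => hfS d hd.1⟩
    obtain ⟨d, hd, rfl⟩ := hf.surjOn (hE he)
    exact ⟨d, ⟨hd, he⟩, rfl⟩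

theorem symm (hS : IsALCQBisim2 I J S) : IsALCQBisim2 J I (flip S) := by
  refine ⟨fun b a hab => (hS.1 a b hab).symm, fun b a hab => ?_⟩
  have : Nonempty Ind₁ := ⟨a⟩
  obtain ⟨hconc, hforth, hback⟩ := hS.2 a b hab
  refine ⟨fun A => (hconc A).symm, fun r E hE => ?_, fun r D hD => ?_⟩
  · obtain ⟨D, hD, f, hf, hfS⟩ := hback r E hE
    obtain ⟨g, hg, hgS⟩ := hf.exists_symm_rel hfS
    exact ⟨D, hD, g, hg, hgS⟩
  · obtain ⟨E, hE, f, hf, hfS⟩ := hforth r D hD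
    obtain ⟨g, hg, hgS⟩ := hf.exists_symm_rel hfS
    exact ⟨E, hE, g, hg, hgS⟩

theorem comp {K : DB CN RN Ind₃} {T : Ind₂ → Ind₃ → Prop}
    (hS : IsALCQBisim2 I J S) (hT : IsALCQBisim2 J K T) :
    IsALCQBisim2 I K (Relation.Comp S T) := by
  refine ⟨fun a c ⟨b, hab, hbc⟩ => ⟨(hS.1 a b hab).1, (hT.1 b c hbc).2⟩,
    fun a c ⟨b, hab, hbc⟩ => ?_⟩
  obtain ⟨hconcS, hforthS, hbackS⟩ := hS.2 a b hab
  obtain ⟨hconcT, hforthT, hbackT⟩ := hT.2 b c hbc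
  refine ⟨fun A => (hconcS A).trans (hconcT A), fun r D hD => ?_, fun r F hF => ?_⟩
  · obtain ⟨E, hE, f, hf, hfS⟩ := hforthS r D hD
    obtain ⟨F, hF, g, hg, hgT⟩ := hforthT r E hE
    exact ⟨F, hF, g ∘ f, hg.comp hf, fun d hd => ⟨f d, hfS d hd, hgT _ (hf.mapsTo hd)⟩⟩
  · obtain ⟨E, hE, g, hg, hgT⟩ := hbackT r F hF
    obtain ⟨D, hD, f, hf, hfS⟩ := hbackS r E hE
    exact ⟨D, hD, g ∘ f, hg.comp hf, fun d hd => ⟨f d, hfS d hd, hgT _ (hf.mapsTo hd)⟩⟩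

theorem encard_succ_inter_le (hS : IsALCQBisim2 I J S) {a : Ind₁} {b : Ind₂} (hab : S a b)
    (r : RN) {X : Set Ind₁} {Y : Set Ind₂} (hXY : ∀ d e, S d e → d ∈ X → e ∈ Y) :
    (I.succ r a ∩ X).encard ≤ (J.succ r b ∩ Y).encard := by
  obtain ⟨E, hE, f, hf, hfS⟩ := (hS.2 a b hab).2.1 r (I.succ r a ∩ X) inter_subset_left
  exact encard_le_encard_of_injOn
    (fun d hd => ⟨hE (hf.mapsTo hd), hXY d (f d) (hfS d hd) hd.2⟩) hf.injOn

/-- No finiteness is needed: the two `encard`s agree, and `ncard` is `encard.toNat`. -/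
theorem ncard_succ_inter_eq (hS : IsALCQBisim2 I J S) {a : Ind₁} {b : Ind₂} (hab : S a b)
    (r : RN) {X : Set Ind₁} {Y : Set Ind₂} (hXY : ∀ d e, S d e → (d ∈ X ↔ e ∈ Y)) :
    (I.succ r a ∩ X).ncard = (J.succ r b ∩ Y).ncard :=
  congrArg ENat.toNat <| le_antisymm
    (hS.encard_succ_inter_le hab r fun d e h => (hXY d e h).1)
    (hS.symm.encard_succ_inter_le hab r fun e d h => (hXY d e h).2)

theorem mem_sem_iff (hS : IsALCQBisim2 I J S) (C : ALCQ CN RN) :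
    ∀ {a b}, S a b → (a ∈ C.sem I ↔ b ∈ C.sem J) := by
  induction C with
  | top => exact fun hab => iff_of_true (hS.1 _ _ hab).1 (hS.1 _ _ hab).2
  | atom A =>
    intro a b hab
    simp only [ALCQ.sem, mem_ofPred_eq, (hS.2 a b hab).1 A, (hS.1 a b hab).1, (hS.1 a b hab).2]
  | neg C ih =>
    intro a b hab
    simp only [ALCQ.sem, mem_sdiff, ih hab, (hS.1 a b hab).1, (hS.1 a b hab).2]
  | inter C D ihC ihD => exact fun hab => and_congr (ihC hab) (ihD hab)
  | ge n r C ih | le n r C ih =>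
    intro a b hab
    simp only [ALCQ.sem, mem_ofPred_eq, (hS.1 a b hab).1, (hS.1 a b hab).2,
      hS.ncard_succ_inter_eq hab r fun d e h => ih h]

end IsALCQBisim2

section Bisimilar

variable {I : DB CN RN Ind} {a b c : Ind}

theorem isALCQBisim_iff {S : Ind → Ind → Prop} : IsALCQBisim I S ↔ IsALCQBisim2 I I S :=
  Iff.rfl

theorem Bisimilar.refl (hrole : ∀ r a b, I.roleFact r a b → a ∈ I.adom ∧ b ∈ I.adom)
    (ha : a ∈ I.adom) : Bisimilar I a a := by
  refine ⟨fun x y => x = y ∧ x ∈ I.adom, isALCQBisim_iff.2 ?_, rfl, ha⟩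
  refine .of_bijOn_succ (fun x _ ⟨rfl, hx⟩ => ⟨hx, hx⟩) (fun x _ ⟨rfl, _⟩ _ => Iff.rfl)
    fun x _ ⟨rfl, _⟩ r => ⟨id, bijOn_id _, fun d hd => ⟨rfl, (hrole r x d hd).2⟩⟩

theorem Bisimilar.symm (h : Bisimilar I a b) : Bisimilar I b a :=
  let ⟨S, hS, hab⟩ := h
  ⟨flip S, (isALCQBisim_iff.1 hS).symm, hab⟩

theorem Bisimilar.trans (h₁ : Bisimilar I a b) (h₂ : Bisimilar I b c) : Bisimilar I a c :=
  let ⟨_, hS, hab⟩ := h₁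
  let ⟨_, hT, hbc⟩ := h₂
  ⟨_, (isALCQBisim_iff.1 hS).comp hT, b, hab, hbc⟩

theorem Bisimilar.concFact_iff (h : Bisimilar I a b) (A : CN) :
    I.concFact A a ↔ I.concFact A b :=
  let ⟨_, hS, hab⟩ := h
  (hS.2 a b hab).1 A

theorem Bisimilar.ncard_succ_inter_cls_eq (h : Bisimilar I a b) (r : RN) (c : Ind) :
    (I.succ r a ∩ cls I c).ncard = (I.succ r b ∩ cls I c).ncard :=
  let ⟨S, hS, hab⟩ := h
  (isALCQBisim_iff.1 hS).ncard_succ_inter_eq hab r fun d e hde =>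
    have hde : Bisimilar I d e := ⟨S, hS, hde⟩
    ⟨(·.trans hde), (·.trans hde.symm)⟩

theorem cls_eq_of_bisimilar (h : Bisimilar I a b) : cls I a = cls I b :=
  ext fun _ => ⟨h.symm.trans, h.trans⟩

theorem bisimilar_of_cls_eq (hrole : ∀ r a b, I.roleFact r a b → a ∈ I.adom ∧ b ∈ I.adom)
    (ha : a ∈ I.adom) (h : cls I b = cls I a) : Bisimilar I a b :=
  (show a ∈ cls I b from h ▸ Bisimilar.refl hrole ha).symm

theorem ncard_succ_inter_le_maxCnt (hfin : I.adom.Finite)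
    (hrole : ∀ r a b, I.roleFact r a b → a ∈ I.adom ∧ b ∈ I.adom)
    (ha : a ∈ I.adom) (r : RN) (X : Set Ind) :
    (I.succ r a ∩ X).ncard ≤ maxCnt I X := by
  refine le_csSup ⟨I.adom.ncard, ?_⟩ ⟨a, ha, r, rfl⟩
  rintro _ ⟨b, -, r, rfl⟩
  exact ncard_le_ncard (fun d hd => (hrole r b d hd.1).2) hfin

end Bisimilar

section Quotient

variable {I : DB CN RN Ind} {a : Ind} {p : Set Ind × ℕ}

def quotRel (I : DB CN RN Ind) (a : Ind) (p : Set Ind × ℕ) : Prop :=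
  a ∈ I.adom ∧ p ∈ qadom I ∧ p.1 = cls I a

theorem quotDB_concFact_iff (hrole : ∀ r a b, I.roleFact r a b → a ∈ I.adom ∧ b ∈ I.adom)
    (hap : quotRel I a p) (A : CN) : (quotDB I).concFact A p ↔ I.concFact A a := by
  refine ⟨fun ⟨_, b, hb, hA⟩ => ?_, fun hA => ⟨hap.2.1, a, hap.2.2, hA⟩⟩
  exact ((bisimilar_of_cls_eq hrole hap.1 (hb.symm.trans hap.2.2)).concFact_iff A).2 hA

theorem mem_quotDB_succ_iff (hrole : ∀ r a b, I.roleFact r a b → a ∈ I.adom ∧ b ∈ I.adom)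
    (hap : quotRel I a p) (r : RN) (q : Set Ind × ℕ) :
    q ∈ (quotDB I).succ r p ↔ q ∈ qadom I ∧ q.2 ≤ (I.succ r a ∩ q.1).ncard := by
  refine ⟨fun ⟨_, hq, b, hb, hcount⟩ => ⟨hq, ?_⟩,
    fun ⟨hq, hcount⟩ => ⟨hap.2.1, hq, a, hap.2.2, hcount⟩⟩
  obtain ⟨c, -, hqc, -⟩ := hq
  rwa [hqc, (bisimilar_of_cls_eq hrole hap.1 (hb.symm.trans hap.2.2)).ncard_succ_inter_cls_eq,
    ← hqc]

theorem exists_bijOn_succ_quotDB (hfin : I.adom.Finite)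
    (hrole : ∀ r a b, I.roleFact r a b → a ∈ I.adom ∧ b ∈ I.adom)
    (hap : quotRel I a p) (r : RN) :
    ∃ f : Ind → Set Ind × ℕ, BijOn f (I.succ r a) ((quotDB I).succ r p) ∧
      ∀ d ∈ I.succ r a, quotRel I d (f d) := by
  have hsucc : I.succ r a ⊆ I.adom := fun d hd => (hrole r a d hd).2
  choose e he using fun X : Set Ind => (hfin.subset (inter_subset_left.trans hsucc)
    : (I.succ r a ∩ X).Finite).exists_bijOn_Icc_ncard
  have hself : ∀ d ∈ I.succ r a, d ∈ I.succ r a ∩ cls I d :=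
    fun d hd => ⟨hd, Bisimilar.refl hrole (hsucc hd)⟩
  have hrange : ∀ d ∈ I.succ r a, e (cls I d) d ∈ Icc 1 (I.succ r a ∩ cls I d).ncard :=
    fun d hd => (he _).mapsTo (hself d hd)
  have hcopy : ∀ d ∈ I.succ r a, (cls I d, e (cls I d) d) ∈ qadom I := fun d hd =>
    ⟨d, hsucc hd, rfl, (hrange d hd).1, le_max_of_le_right <|
      (hrange d hd).2.trans (ncard_succ_inter_le_maxCnt hfin hrole hap.1 r _)⟩
  refine ⟨fun d => (cls I d, e (cls I d) d), ⟨fun d hd => ?_, fun d hd d' hd' hdd' => ?_, ?_⟩,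
    fun d hd => ⟨hsucc hd, hcopy d hd, rfl⟩⟩
  · exact (mem_quotDB_succ_iff hrole hap r _).2 ⟨hcopy d hd, (hrange d hd).2⟩
  · obtain ⟨hcls, hidx⟩ := Prod.ext_iff.1 hdd'
    simp only at hcls hidx
    rw [← hcls] at hidx
    exact (he _).injOn (hself d hd) (hcls ▸ hself d' hd') hidx
  · rintro q hq
    obtain ⟨hq, hcount⟩ := (mem_quotDB_succ_iff hrole hap r q).1 hq
    obtain ⟨c, -, hqc, hpos, -⟩ := hq
    obtain ⟨d, ⟨hd, hdq⟩, hdi⟩ := (he q.1).surjOn ⟨hpos, hcount⟩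
    have hcls : cls I d = q.1 := by
      rw [hqc] at hdq ⊢
      exact (cls_eq_of_bisimilar hdq).symm
    exact ⟨d, hd, Prod.ext hcls (by simp only [hcls, hdi])⟩

theorem isALCQBisim2_quotRel (hfin : I.adom.Finite)
    (hrole : ∀ r a b, I.roleFact r a b → a ∈ I.adom ∧ b ∈ I.adom) :
    IsALCQBisim2 I (quotDB I) (quotRel I) :=
  .of_bijOn_succ (fun _ _ hap => ⟨hap.1, hap.2.1⟩)
    (fun _ _ hap A => (quotDB_concFact_iff hrole hap A).symm)
    fun _ _ hap => exists_bijOn_succ_quotDB hfin hrole hap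

end Quotient

theorem stmt9_general {CN RN Ind : Type} (I : DB CN RN Ind)
    (hfin : I.adom.Finite)
    (hrole : ∀ r a b, I.roleFact r a b → a ∈ I.adom ∧ b ∈ I.adom) :
    ∀ a ∈ I.adom, ∀ i : ℕ, 1 ≤ i → i ≤ max 1 (maxCnt I (cls I a)) →
      (∃ S, IsALCQBisim2 I (quotDB I) S ∧ S a (cls I a, i)) ∧
      ∀ C : ALCQ CN RN, a ∈ C.sem I ↔ (cls I a, i) ∈ C.sem (quotDB I) := by
  intro a ha i hi₁ hi₂
  have hS := isALCQBisim2_quotRel hfin hrole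
  have hrel : quotRel I a (cls I a, i) := ⟨ha, ⟨a, ha, rfl, hi₁, hi₂⟩, rfl⟩
  exact ⟨⟨_, hS, hrel⟩, fun C => hS.mem_sem_iff C hrel⟩

theorem stmt9 {CN RN Ind : Type} (I : DB CN RN Ind)
    (hfin : I.adom.Finite)
    (hrole : ∀ r a b, I.roleFact r a b → a ∈ I.adom ∧ b ∈ I.adom)
    (hconc : ∀ A a, I.concFact A a → a ∈ I.adom) :
    ∀ a ∈ I.adom, ∀ i : ℕ, 1 ≤ i → i ≤ max 1 (maxCnt I (cls I a)) →
      (∃ S, IsALCQBisim2 I (quotDB I) S ∧ S a (cls I a, i)) ∧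
      ∀ C : ALCQ CN RN, a ∈ C.sem I ↔ (cls I a, i) ∈ C.sem (quotDB I) :=
  stmt9_general I hfin hrole
end

section
/- In a database I in which every 'group' of individuals is pairwise ALCQI-bisimilar and each group has size at least k'+1, for every ALCQI concept E, every role or inverse role R, and every natural number M with 1 ≤ M ≤ k': (≥ M R.E)^I = (≥ 1 R.E)^I and (≤ M R.E)^I = (≤ 0 R.E)^I. -/
inductive Role (RN : Type) : Type where
  | rn (r : RN) : Role RN
  | inv (r : RN) : Role RN

def DB.succR {CN RN Ind : Type} (I : DB CN RN Ind) : Role RN → Ind → Set Ind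
  | .rn r, a => {b | I.roleFact r a b}
  | .inv r, a => {b | I.roleFact r b a}

inductive ALCQI (CN RN : Type) : Type where
  | top : ALCQI CN RN
  | atom (A : CN) : ALCQI CN RN
  | neg (C : ALCQI CN RN) : ALCQI CN RN
  | inter (C D : ALCQI CN RN) : ALCQI CN RN
  | ge (n : ℕ) (R : Role RN) (C : ALCQI CN RN) : ALCQI CN RN
  | le (n : ℕ) (R : Role RN) (C : ALCQI CN RN) : ALCQI CN RN

def ALCQI.sem {CN RN Ind : Type} (I : DB CN RN Ind) : ALCQI CN RN → Set Ind
  | .top => I.adom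
  | .atom A => {a ∈ I.adom | I.concFact A a}
  | .neg C => I.adom \ C.sem I
  | .inter C D => C.sem I ∩ D.sem I
  | .ge n R C => {a ∈ I.adom | n ≤ (I.succR R a ∩ C.sem I).ncard}
  | .le n R C => {a ∈ I.adom | (I.succR R a ∩ C.sem I).ncard ≤ n}

def FitsI {CN RN Ind : Type} (I : DB CN RN Ind) (C : ALCQI CN RN)
    (P N : Set Ind) : Prop :=
  (∀ a ∈ P, a ∈ C.sem I) ∧ ∀ b ∈ N, b ∉ C.sem I

/-- In a database whose domain is partitioned into groups of pairwise
ALCQI-indistinguishable individuals, with group-respecting edges and every group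
of size at least `k' + 1`, number restrictions with numbers `1 ≤ M ≤ k'`
collapse: `(≥ M R.E)^I = (≥ 1 R.E)^I` and `(≤ M R.E)^I = (≤ 0 R.E)^I`. -/
theorem stmt11 {CN RN Ind G : Type} (I : DB CN RN Ind) (grp : Ind → G) (k' : ℕ)
    (hfin : I.adom.Finite)
    (hrole : ∀ r a b, I.roleFact r a b → a ∈ I.adom ∧ b ∈ I.adom)
    (hsame : ∀ a b, grp a = grp b → ∀ C : ALCQI CN RN, a ∈ C.sem I ↔ b ∈ C.sem I)
    (hgrpmem : ∀ a b, grp a = grp b → (a ∈ I.adom ↔ b ∈ I.adom))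
    (hedge : ∀ (r : RN) (a a' b b' : Ind), grp a = grp a' → grp b = grp b' →
      (I.roleFact r a b ↔ I.roleFact r a' b'))
    (hsize : ∀ a ∈ I.adom, k' + 1 ≤ {b ∈ I.adom | grp b = grp a}.ncard) :
    ∀ (E : ALCQI CN RN) (R : Role RN) (M : ℕ), 1 ≤ M → M ≤ k' →
      (ALCQI.ge M R E).sem I = (ALCQI.ge 1 R E).sem I ∧
      (ALCQI.le M R E).sem I = (ALCQI.le 0 R E).sem I := by
  -- key dichotomy: the successor set intersected with E is empty or has ≥ k'+1 elements
  have key : ∀ (E : ALCQI CN RN) (R : Role RN) (a : Ind),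
      (I.succR R a ∩ E.sem I).ncard = 0 ∨ k' + 1 ≤ (I.succR R a ∩ E.sem I).ncard := by
    intro E R a
    set S := I.succR R a ∩ E.sem I with hS
    have hSsub : S ⊆ I.adom := by
      intro b hb
      cases R with
      | rn r => exact (hrole r a b hb.1).2
      | inv r => exact (hrole r b a hb.1).1
    have hfinS : S.Finite := hfin.subset hSsub
    rcases S.eq_empty_or_nonempty with h | ⟨b, hb⟩
    · left; simp [h]
    · right
      have hgsub : {b' ∈ I.adom | grp b' = grp b} ⊆ S := by
        intro b' hb'
        obtain ⟨hb'ad, hg⟩ := hb'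
        constructor
        · cases R with
          | rn r => exact (hedge r a a b b' rfl hg.symm).mp hb.1
          | inv r => exact (hedge r b b' a a hg.symm rfl).mp hb.1
        · exact (hsame b' b hg E).mpr hb.2
      calc k' + 1 ≤ {b' ∈ I.adom | grp b' = grp b}.ncard := hsize b (hSsub hb)
        _ ≤ S.ncard := Set.ncard_le_ncard hgsub hfinS
  intro E R M hM1 hMk
  constructor
  · ext a
    simp only [ALCQI.sem, Set.mem_setOf_eq]
    constructor
    · rintro ⟨ha, hn⟩; exact ⟨ha, le_trans hM1 hn⟩
    · rintro ⟨ha, hn⟩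
      refine ⟨ha, ?_⟩
      rcases key E R a with h | h
      · omega
      · omega
  · ext a
    simp only [ALCQI.sem, Set.mem_setOf_eq]
    constructor
    · rintro ⟨ha, hn⟩
      refine ⟨ha, ?_⟩
      rcases key E R a with h | h <;> omega
    · rintro ⟨ha, hn⟩; exact ⟨ha, le_trans hn (Nat.zero_le M)⟩
end

section
/- In the hitting-set reduction database I, for every hitting set H of S = {S₁, …, S_m} with |H| ≤ k, the path concept ∃r.C_n (where C₀ = A, C_i = ∃r.C_{i−1} if n−i+1 ∉ H, and C_i = ∃s.∃s.C_{i−1} if n−i+1 ∈ H) has size exactly n + |H| + 2 and fits {a}, {b} in I. -/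
/-- Individuals of the hitting-set reduction database: roots `a`, `b`, the
`a`-path nodes `aᵢ` with detour nodes `aᵢ'`, and for each `j` the `b_j`-path
nodes `b_{j,i}` with detour nodes `b_{j,i}'`. -/
inductive HInd (m n : ℕ) : Type where
  | rootA : HInd m n
  | rootB : HInd m n
  | an (i : Fin (n + 1)) : HInd m n
  | ap (i : Fin n) : HInd m n
  | bn (j : Fin m) (i : Fin (n + 1)) : HInd m n
  | bp (j : Fin m) (i : Fin n) : HInd m n

/-- The hitting-set reduction database for sets `S j ⊆ {1,…,n}` (a position
`i : Fin n` represents the number `i+1`). Role `true` is `r`, role `false`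
is `s`; the single concept name `A` holds at the final path nodes. The `b_j`-path
has the `s`-detour at position `i` exactly when `i ∉ S j`. -/
def hitDB (m n : ℕ) (S : Fin m → Finset (Fin n)) : DB Unit Bool (HInd m n) where
  concFact := fun _ x => x = .an (Fin.last n) ∨ ∃ j, x = .bn j (Fin.last n)
  roleFact := fun rr x y =>
    if rr then
      (x = .rootA ∧ (y = HInd.an 0 ∨ ∃ j, y = HInd.bn j 0)) ∨
      (x = .rootB ∧ ∃ j, y = HInd.bn j 0) ∨
      (∃ i : Fin n, x = HInd.an i.castSucc ∧ y = HInd.an i.succ) ∨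
      (∃ (j : Fin m) (i : Fin n), x = HInd.bn j i.castSucc ∧ y = HInd.bn j i.succ)
    else
      (∃ i : Fin n, x = HInd.an i.castSucc ∧ y = HInd.ap i) ∨
      (∃ i : Fin n, x = HInd.ap i ∧ y = HInd.an i.succ) ∨
      (∃ (j : Fin m) (i : Fin n), i ∉ S j ∧
        ((x = HInd.bn j i.castSucc ∧ y = HInd.bp j i) ∨
         (x = HInd.bp j i ∧ y = HInd.bn j i.succ)))
  adom := Set.univ

/-- Path concepts: `A` and `∃w.C` for `w` a role name. -/
inductive PC (CN RN : Type) : Type where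
  | atom (A : CN) : PC CN RN
  | ex (r : RN) (C : PC CN RN) : PC CN RN

def PC.sem {CN RN Ind : Type} (I : DB CN RN Ind) : PC CN RN → Set Ind
  | .atom A => {a ∈ I.adom | I.concFact A a}
  | .ex r C => {a ∈ I.adom | ∃ b ∈ I.succ r a, b ∈ C.sem I}

def PC.size {CN RN : Type} : PC CN RN → ℕ
  | .atom _ => 1
  | .ex _ C => 1 + C.size

/-- `Cpath n H i` is the concept `C_i`: `C_0 = A`, and `C_i = ∃s.∃s.C_{i-1}` if
position `n−i+1` belongs to `H` (i.e. the Fin-index `n−i` is in `H`),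
`C_i = ∃r.C_{i-1}` otherwise. -/
def Cpath (n : ℕ) (H : Finset (Fin n)) : ℕ → PC Unit Bool
  | 0 => .atom ()
  | (i + 1) =>
      if h : n - (i + 1) < n then
        if (⟨n - (i + 1), h⟩ : Fin n) ∈ H then
          .ex false (.ex false (Cpath n H i))
        else .ex true (Cpath n H i)
      else .ex true (Cpath n H i)

/-!
`C_{n-p}` is the concept read off from position `p` onwards, so everything goes by
reverse induction on `p`. On the `a`-path both the `r`-edge and the `s`-detour exist at
every position, hence `a_p` satisfies `C_{n-p}`. On the `b_j`-path the detour at position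
`i` is missing exactly when `i ∈ S_j`, while `C_{n-p}` demands the detour at every
position of `H` after `p`; a position in `H ∩ S_j` therefore blocks `b_{j,p}`, and
`H` hits every `S_j`. The size counts one symbol per position plus one per position of `H`.
-/

open Finset

theorem Finset.card_filter_le_eq_card_filter_lt_add {α : Type*} [LinearOrder α]
    (s : Finset α) (a : α) :
    #(s.filter (a ≤ ·)) = #(s.filter (a < ·)) + if a ∈ s then 1 else 0 := by
  rw [show s.filter (a ≤ ·) = s.filter (fun x => a < x ∨ a = x) by simp only [le_iff_lt_or_eq],
    Finset.filter_or, Finset.card_union_of_disjoint, Finset.filter_eq]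
  · split_ifs <;> simp
  · exact Finset.disjoint_filter.2 fun _ _ h => h.ne

section Cpath

variable {n : ℕ} (H : Finset (Fin n))

theorem Cpath_sub_castSucc (i : Fin n) :
    Cpath n H (n - i.castSucc) =
      if i ∈ H then .ex false (.ex false (Cpath n H (n - i.succ)))
      else .ex true (Cpath n H (n - i.succ)) := by
  have hi : n - (i.castSucc : ℕ) = n - (i.succ : ℕ) + 1 := by
    simp only [Fin.val_castSucc, Fin.val_succ]; omega
  have hlt : n - (n - (i.succ : ℕ) + 1) < n := by omega
  have hfin : (⟨n - (n - (i.succ : ℕ) + 1), hlt⟩ : Fin n) = i := by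
    ext; simp only [Fin.val_succ]; omega
  rw [hi, Cpath, dif_pos hlt, hfin]

theorem size_Cpath_sub (p : Fin (n + 1)) :
    (Cpath n H (n - p)).size = n - p + 1 + #(H.filter (p ≤ ·.castSucc)) := by
  induction p using Fin.reverseInduction with
  | last => simp [Cpath, PC.size]
  | cast i ih =>
    have hcard := H.card_filter_le_eq_card_filter_lt_add i
    simp only [Fin.succ_le_castSucc_iff, Fin.val_succ] at ih
    rw [Cpath_sub_castSucc]
    by_cases hi : i ∈ H <;>
      simp only [hi, if_true, if_false, PC.size, ih, Fin.castSucc_le_castSucc_iff,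
        Fin.val_castSucc, Fin.val_succ] at hcard ⊢ <;>
      omega

end Cpath

namespace hitDB

variable {m n : ℕ} {S : Fin m → Finset (Fin n)}

theorem mem_sem_ex {r : Bool} {C : PC Unit Bool} {x : HInd m n} :
    x ∈ (PC.ex r C).sem (hitDB m n S) ↔ ∃ y ∈ (hitDB m n S).succ r x, y ∈ C.sem (hitDB m n S) := by
  simp [PC.sem, hitDB]

theorem an_zero_mem_succ_r_rootA : HInd.an 0 ∈ (hitDB m n S).succ true .rootA := by
  simp [DB.succ, hitDB]

theorem an_succ_mem_succ_r_an (i : Fin n) :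
    HInd.an i.succ ∈ (hitDB m n S).succ true (.an i.castSucc) := by
  simp [DB.succ, hitDB]

theorem ap_mem_succ_s_an (i : Fin n) : HInd.ap i ∈ (hitDB m n S).succ false (.an i.castSucc) := by
  simp [DB.succ, hitDB]

theorem an_succ_mem_succ_s_ap (i : Fin n) : HInd.an i.succ ∈ (hitDB m n S).succ false (.ap i) := by
  simp [DB.succ, hitDB]

theorem mem_succ_r_rootB {y : HInd m n} :
    y ∈ (hitDB m n S).succ true .rootB ↔ ∃ j, y = .bn j 0 := by
  simp [DB.succ, hitDB]

theorem mem_succ_r_bn {j : Fin m} {i : Fin n} {y : HInd m n} :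
    y ∈ (hitDB m n S).succ true (.bn j i.castSucc) ↔ y = .bn j i.succ := by
  simp [DB.succ, hitDB]

theorem mem_succ_s_bn {j : Fin m} {i : Fin n} {y : HInd m n} :
    y ∈ (hitDB m n S).succ false (.bn j i.castSucc) ↔ i ∉ S j ∧ y = .bp j i := by
  simp [DB.succ, hitDB]

theorem mem_succ_s_bp {j : Fin m} {i : Fin n} {y : HInd m n} :
    y ∈ (hitDB m n S).succ false (.bp j i) ↔ i ∉ S j ∧ y = .bn j i.succ := by
  simp [DB.succ, hitDB]

end hitDB

section paths

open hitDB

variable {m n : ℕ} (S : Fin m → Finset (Fin n)) (H : Finset (Fin n))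

theorem an_mem_sem_Cpath (p : Fin (n + 1)) : HInd.an p ∈ (Cpath n H (n - p)).sem (hitDB m n S) := by
  induction p using Fin.reverseInduction with
  | last => simp [Cpath, PC.sem, hitDB]
  | cast i ih =>
    rw [Cpath_sub_castSucc]
    split_ifs
    · exact mem_sem_ex.2 ⟨_, ap_mem_succ_s_an i, mem_sem_ex.2 ⟨_, an_succ_mem_succ_s_ap i, ih⟩⟩
    · exact mem_sem_ex.2 ⟨_, an_succ_mem_succ_r_an i, ih⟩

theorem bn_not_mem_sem_Cpath {j : Fin m} {x : Fin n} (hxH : x ∈ H) (hxS : x ∈ S j)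
    (p : Fin (n + 1)) (hpx : p ≤ x.castSucc) :
    HInd.bn j p ∉ (Cpath n H (n - p)).sem (hitDB m n S) := by
  induction p using Fin.reverseInduction with
  | last => exact absurd hpx (Fin.castSucc_lt_last x).not_ge
  | cast i ih =>
    have ih_of_ne (hix : i ≠ x) := ih (Fin.succ_le_castSucc_iff.2
      (lt_of_le_of_ne (Fin.castSucc_le_castSucc_iff.1 hpx) hix))
    rw [Cpath_sub_castSucc]
    split_ifs with hiH
    · intro h
      obtain ⟨_, hy, h⟩ := mem_sem_ex.1 h
      obtain ⟨hiS, rfl⟩ := mem_succ_s_bn.1 hy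
      obtain ⟨_, hz, h⟩ := mem_sem_ex.1 h
      obtain ⟨-, rfl⟩ := mem_succ_s_bp.1 hz
      exact ih_of_ne (by rintro rfl; exact hiS hxS) h
    · intro h
      obtain ⟨_, hy, h⟩ := mem_sem_ex.1 h
      obtain rfl := mem_succ_r_bn.1 hy
      exact ih_of_ne (by rintro rfl; exact hiH hxH) h

end paths

theorem stmt13_general (m n : ℕ) (S : Fin m → Finset (Fin n)) (H : Finset (Fin n))
    (hhit : ∀ j : Fin m, ∃ x ∈ H, x ∈ S j) :
    (PC.ex true (Cpath n H n)).size = n + H.card + 2 ∧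
    HInd.rootA ∈ (PC.ex true (Cpath n H n)).sem (hitDB m n S) ∧
    HInd.rootB ∉ (PC.ex true (Cpath n H n)).sem (hitDB m n S) := by
  refine ⟨?_, ?_, ?_⟩
  · have hsize := size_Cpath_sub H 0
    rw [Finset.filter_true_of_mem fun x _ => Fin.zero_le x.castSucc] at hsize
    simp only [Fin.coe_ofNat_eq_mod, Nat.zero_mod, Nat.sub_zero] at hsize
    simp only [PC.size, hsize]
    omega
  · simpa using hitDB.mem_sem_ex.2 ⟨_, hitDB.an_zero_mem_succ_r_rootA, an_mem_sem_Cpath S H 0⟩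
  · intro h
    obtain ⟨_, hy, h⟩ := hitDB.mem_sem_ex.1 h
    obtain ⟨j, rfl⟩ := hitDB.mem_succ_r_rootB.1 hy
    obtain ⟨x, hxH, hxS⟩ := hhit j
    exact bn_not_mem_sem_Cpath S H hxH hxS 0 (Fin.zero_le _) (by simpa using h)

/-- Every hitting set `H` of size at most `k` yields a path concept
`∃r.C_n` of size `n + |H| + 2` fitting `{a}, {b}` in the reduction database. -/
theorem stmt13 (m n k : ℕ) (S : Fin m → Finset (Fin n)) (H : Finset (Fin n))
    (hhit : ∀ j : Fin m, ∃ x ∈ H, x ∈ S j) (hcard : H.card ≤ k) :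
    (PC.ex true (Cpath n H n)).size = n + H.card + 2 ∧
    HInd.rootA ∈ (PC.ex true (Cpath n H n)).sem (hitDB m n S) ∧
    HInd.rootB ∉ (PC.ex true (Cpath n H n)).sem (hitDB m n S) :=
  stmt13_general m n S H hhit
end

section
/- In the hitting-set reduction database I, if a path concept ∃r.∃w.A with w ∈ (r + ss)* fits {a}, {b}, then the set H = {i | the i-th block of w is ss} is a hitting set for S = {S₁, …, S_m}, and the size of the concept is n + |H| + 2. -/
/-!
If `H` missed some `S j`, then every `ss`-block of `w` would sit at a position where the
`b_j`-path has its `s`-detour, while every `r`-block can follow the path itself; so `b_{j,0}`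
would satisfy `∃w.A`, and the root `b`, which has an `r`-edge to `b_{j,0}`, would satisfy
`∃r.∃w.A`, contradicting the fit. The size counts one per role in `w`, one for the leading
`r` and one for `A`.
-/

open Finset

namespace hitDB

variable {m n : ℕ} (S : Fin m → Finset (Fin n))

lemma rootB_r_bn (j : Fin m) : (hitDB m n S).roleFact true .rootB (.bn j 0) := by
  simp [hitDB]

lemma bn_r_bn (j : Fin m) (i : Fin n) :
    (hitDB m n S).roleFact true (.bn j i.castSucc) (.bn j i.succ) := by
  simp [hitDB]

lemma bn_s_bp {j : Fin m} {i : Fin n} (hi : i ∉ S j) :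
    (hitDB m n S).roleFact false (.bn j i.castSucc) (.bp j i) := by
  simp [hitDB, hi]

lemma bp_s_bn {j : Fin m} {i : Fin n} (hi : i ∉ S j) :
    (hitDB m n S).roleFact false (.bp j i) (.bn j i.succ) := by
  simp [hitDB, hi]

end hitDB

section Cpath

variable {m n : ℕ} (S : Fin m → Finset (Fin n)) (H : Finset (Fin n))

lemma Cpath_succ {i : ℕ} (hi : i < n) :
    Cpath n H (i + 1) =
      if (⟨n - (i + 1), by omega⟩ : Fin n) ∈ H then .ex false (.ex false (Cpath n H i))
      else .ex true (Cpath n H i) := by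
  rw [Cpath, dif_pos (by omega)]

lemma size_Cpath {i : ℕ} (hi : i ≤ n) :
    (Cpath n H i).size = i + 1 + #{x ∈ H | n - i ≤ ((x : Fin n) : ℕ)} := by
  induction i with
  | zero =>
    have : ({x ∈ H | n ≤ ((x : Fin n) : ℕ)} : Finset (Fin n)) = ∅ :=
      filter_false_of_mem fun x _ => by omega
    simp [Cpath, PC.size, this]
  | succ i ih =>
    set k : Fin n := ⟨n - (i + 1), by omega⟩
    have hsplit : ({x ∈ H | n - (i + 1) ≤ ((x : Fin n) : ℕ)} : Finset (Fin n)) =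
        {x ∈ H | n - i ≤ ((x : Fin n) : ℕ)} ∪ {x ∈ H | (x : Fin n) = k} := by
      rw [← filter_or]
      refine filter_congr fun x _ => ?_
      simp only [k, Fin.ext_iff]
      omega
    have hdisj : Disjoint ({x ∈ H | n - i ≤ ((x : Fin n) : ℕ)} : Finset (Fin n))
        {x ∈ H | (x : Fin n) = k} := by
      refine disjoint_filter.mpr fun x _ hx hxk => ?_
      simp only [k, Fin.ext_iff] at hxk
      omega
    rw [Cpath_succ H (by omega), hsplit, card_union_of_disjoint hdisj,
      filter_eq']
    by_cases hk : k ∈ H <;> simp [k, hk, PC.size, ih (by omega)] <;> omega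

lemma bn_mem_sem_Cpath {j : Fin m} (hj : Disjoint H (S j)) {i : ℕ} (hi : i ≤ n) :
    HInd.bn j ⟨n - i, by omega⟩ ∈ (Cpath n H i).sem (hitDB m n S) := by
  induction i with
  | zero => exact ⟨trivial, Or.inr ⟨j, rfl⟩⟩
  | succ i ih =>
    set k : Fin n := ⟨n - (i + 1), by omega⟩
    have hsrc : (HInd.bn j ⟨n - (i + 1), by omega⟩ : HInd m n) = .bn j k.castSucc := rfl
    have htgt : (HInd.bn j ⟨n - i, by omega⟩ : HInd m n) = .bn j k.succ := by
      simp only [HInd.bn.injEq, true_and, Fin.ext_iff, Fin.val_succ, k]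
      omega
    replace ih := htgt ▸ ih (by omega)
    rw [hsrc, Cpath_succ H (by omega)]
    split_ifs with hk
    · have hkS : k ∉ S j := disjoint_left.mp hj hk
      exact ⟨trivial, _, hitDB.bn_s_bp S hkS, trivial, _, hitDB.bp_s_bn S hkS, ih⟩
    · exact ⟨trivial, _, hitDB.bn_r_bn S j k, ih⟩

end Cpath

/-- Conversely, if the path concept `∃r.C_n` determined by `H` (whose `i`-th
block is `ss` iff `i ∈ H`) fits `{a}, {b}` in the reduction database, then `H`
is a hitting set for `S`, and the concept has size `n + |H| + 2`. -/
theorem stmt14 (m n : ℕ) (S : Fin m → Finset (Fin n)) (H : Finset (Fin n))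
    (hfit : HInd.rootA ∈ (PC.ex true (Cpath n H n)).sem (hitDB m n S) ∧
      HInd.rootB ∉ (PC.ex true (Cpath n H n)).sem (hitDB m n S)) :
    (∀ j : Fin m, ∃ x ∈ H, x ∈ S j) ∧
    (PC.ex true (Cpath n H n)).size = n + H.card + 2 := by
  refine ⟨fun j => not_disjoint_iff.mp fun hj => hfit.2 ?_, ?_⟩
  · have hbj := bn_mem_sem_Cpath S H hj le_rfl
    simp only [Nat.sub_self, Fin.zero_eta] at hbj
    exact ⟨trivial, _, hitDB.rootB_r_bn S j, hbj⟩
  · have hall : ({x ∈ H | n - n ≤ ((x : Fin n) : ℕ)} : Finset (Fin n)) = H :=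
      filter_true_of_mem fun x _ => by omega
    rw [PC.size, size_Cpath H le_rfl, hall]
    omega
end
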